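/- Let G be a finite simple graph on the vertex set {1,…,n} with m edges. Then the ideal P_G of diagonal 2-minors coincides with the toric ideal I_{A_G}; that is, P_G equals the kernel of the K-algebra homomorphism φ: S → K[t_1^{±1},…,t_{n+m}^{±1}] sending each variable of S to the Laurent monomial t^a, where a ∈ A_G is the vector indexed by that variable. -/

import Mathlib

open MvPolynomial

/-- The set of variables of the polynomial ring `S`: one variable `x_{ii}` for each vertex `i`
of `G` and two variables `x_{ij}`, `x_{ji}` for each edge `{i,j}` of `G`. -/
abbrev VarSet (n : ℕ) (G : SimpleGraph (Fin n)) : Type :=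
  {p : Fin n × Fin n // p.1 = p.2 ∨ G.Adj p.1 p.2}

/-- The diagonal 2-minor `f_{ij} = x_{ii} x_{jj} - x_{ij} x_{ji}`. -/
noncomputable def fij (K : Type) [Field K] {n : ℕ} {G : SimpleGraph (Fin n)}
    {i j : Fin n} (h : G.Adj i j) : MvPolynomial (VarSet n G) K :=
  X ⟨(i, i), Or.inl rfl⟩ * X ⟨(j, j), Or.inl rfl⟩ -
    X ⟨(i, j), Or.inr h⟩ * X ⟨(j, i), Or.inr h.symm⟩

/-- The ideal `P_G` generated by the diagonal 2-minors `f_{ij}` for edges `{i,j}`, `i < j`. -/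
noncomputable def PG (K : Type) [Field K] (n : ℕ) (G : SimpleGraph (Fin n)) :
    Ideal (MvPolynomial (VarSet n G) K) :=
  Ideal.span {f | ∃ i j : Fin n, ∃ h : G.Adj i j, i < j ∧ f = fij K h}

/-- The index `t` of the edge `{i,j}` in the fixed enumeration `z` of the edges of `G`. -/
noncomputable def edgeIdx {n m : ℕ} {G : SimpleGraph (Fin n)} (z : Fin m ≃ G.edgeSet)
    {i j : Fin n} (h : G.Adj i j) : Fin m :=
  z.symm ⟨s(i, j), G.mem_edgeSet.mpr h⟩

/-- The vector configuration `A_G ⊂ ℤ^{n+m}`, indexed by the variables of `S`: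
the variable `x_{jj}` gets `e_j`; for the edge `z_t = {i,j}` with `i < j`, the variable `x_{ij}`
gets `e_i + e_j - e_{n+t}` and the variable `x_{ji}` gets `e_{n+t}`. -/
noncomputable def aVec (n m : ℕ) (G : SimpleGraph (Fin n)) (z : Fin m ≃ G.edgeSet)
    (v : VarSet n G) : (Fin n ⊕ Fin m) → ℤ :=
  if hij : v.1.1 = v.1.2 then Pi.single (Sum.inl v.1.1) 1
  else
    have hadj : G.Adj v.1.1 v.1.2 := v.2.resolve_left hij
    if v.1.1 < v.1.2 then
      Pi.single (Sum.inl v.1.1) 1 + Pi.single (Sum.inl v.1.2) 1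
        - Pi.single (Sum.inr (edgeIdx z hadj)) 1
    else Pi.single (Sum.inr (edgeIdx z hadj)) 1

/-- The `K`-algebra homomorphism `φ : S → K[t_1^{±1},…,t_{n+m}^{±1}]` sending each variable of
`S` to the Laurent monomial `t^a` given by the corresponding vector `a ∈ A_G`. -/
noncomputable def phiMap (K : Type) [Field K] (n m : ℕ) (G : SimpleGraph (Fin n))
    (z : Fin m ≃ G.edgeSet) :
    MvPolynomial (VarSet n G) K →ₐ[K] AddMonoidAlgebra K ((Fin n ⊕ Fin m) → ℤ) :=
  MvPolynomial.aeval fun v => AddMonoidAlgebra.single (aVec n m G z v) (1 : K)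

/-! `P_G ⊆ I_{A_G}` because each `f_{ij}` is a binomial `x^u - x^v` with `A_G u = A_G v`.
Conversely, rewriting `x_{ij} x_{ji}` to `x_{ii} x_{jj}` lowers the off-diagonal degree, so
every monomial is congruent modulo `P_G` to a *standard* one, in which no edge carries both
`x_{ij}` and `x_{ji}`. A standard exponent `d` is recovered from `A_G d`: for the edge
`z_t = {i < j}` the coordinate `n + t` is `d_{ji} - d_{ij}`, which determines both exponents
since one of them vanishes, and then coordinate `i` is `d_{ii}`. So modulo `P_G` a polynomial
in the kernel becomes a combination of standard monomials with distinct images, hence zero. -/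

section Toric
variable {σ M : Type*} [AddCommMonoid M]

section CommSemiring
variable (K : Type*) [CommSemiring K]

noncomputable def toricMap (a : σ → M) : MvPolynomial σ K →ₐ[K] AddMonoidAlgebra K M :=
  aeval fun v => AddMonoidAlgebra.single (a v) 1

theorem toricMap_eq_mapDomainAlgHom (a : σ → M) :
    toricMap K a = AddMonoidAlgebra.mapDomainAlgHom K K (Finsupp.weight a) := by
  refine MvPolynomial.algHom_ext fun v => ?_
  change _ = AddMonoidAlgebra.mapDomain _ (AddMonoidAlgebra.single (Finsupp.single v 1) 1)
  rw [toricMap, aeval_X, AddMonoidAlgebra.mapDomain_single, Finsupp.weight_single, one_smul]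

theorem toricMap_monomial (a : σ → M) (d : σ →₀ ℕ) (c : K) :
    toricMap K a (monomial d c) = AddMonoidAlgebra.single (Finsupp.weight a d) c := by
  rw [toricMap_eq_mapDomainAlgHom, AddMonoidAlgebra.mapDomainAlgHom_apply]
  exact AddMonoidAlgebra.mapDomain_single

theorem eq_zero_of_toricMap_eq_zero {a : σ → M} {S : Set (σ →₀ ℕ)}
    (hS : Set.InjOn (Finsupp.weight a) S) {p : MvPolynomial σ K} (hp : ↑p.support ⊆ S)
    (h : toricMap K a p = 0) : p = 0 := by
  rw [toricMap_eq_mapDomainAlgHom, AddMonoidAlgebra.mapDomainAlgHom_apply] at h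
  refine AddMonoidAlgebra.coeff_injective (Finsupp.mapDomain_injOn S hS hp (by simp) ?_)
  simpa using congrArg AddMonoidAlgebra.coeff h

end CommSemiring

variable {K : Type*} [CommRing K]

theorem monomial_sub_monomial_mem_ker_toricMap {a : σ → M} {u v : σ →₀ ℕ}
    (h : Finsupp.weight a u = Finsupp.weight a v) :
    monomial u (1 : K) - monomial v 1 ∈ RingHom.ker (toricMap K a) := by
  rw [RingHom.mem_ker, map_sub, toricMap_monomial, toricMap_monomial, h, sub_self]

theorem ker_toricMap_le {a : σ → M} {I : Ideal (MvPolynomial σ K)}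
    (hI : I ≤ RingHom.ker (toricMap K a)) {S : Set (σ →₀ ℕ)} (hS : Set.InjOn (Finsupp.weight a) S)
    (hnf : ∀ d, ∃ d' ∈ S, monomial d (1 : K) - monomial d' 1 ∈ I) :
    RingHom.ker (toricMap K a) ≤ I := by
  classical
  intro p hp
  choose r hrS hrI using hnf
  set q : MvPolynomial σ K := ∑ d ∈ p.support, monomial (r d) (coeff d p)
  have hpq : p - q ∈ I := by
    have : p - q = ∑ d ∈ p.support, C (coeff d p) * (monomial d 1 - monomial (r d) 1) := by
      conv_lhs => rw [p.as_sum]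
      simp only [q, ← Finset.sum_sub_distrib, mul_sub, C_mul_monomial, mul_one]
    rw [this]
    exact Ideal.sum_mem _ fun d _ => Ideal.mul_mem_left _ _ (hrI d)
  have hq : q ∈ RingHom.ker (toricMap K a) := by
    simpa using Ideal.sub_mem _ hp (hI hpq)
  have hqS : ↑q.support ⊆ S := fun e he => by
    obtain ⟨d, -, hd⟩ := Finset.mem_biUnion.mp (support_sum he)
    rw [Finset.mem_singleton.mp (support_monomial_subset hd)]
    exact hrS d
  simpa [eq_zero_of_toricMap_eq_zero K hS hqS hq] using hpq

end Toric

section Graph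
open Finsupp
variable {n m : ℕ} {G : SimpleGraph (Fin n)}

def diagVar (G : SimpleGraph (Fin n)) (i : Fin n) : VarSet n G := ⟨(i, i), Or.inl rfl⟩

def edgeVar {i j : Fin n} (h : G.Adj i j) : VarSet n G := ⟨(i, j), Or.inr h⟩

theorem eq_diagVar_or_eq_edgeVar (v : VarSet n G) :
    (∃ i, v = diagVar G i) ∨ ∃ i j, ∃ h : G.Adj i j, v = edgeVar h := by
  obtain ⟨⟨a, b⟩, hab | hab⟩ := v
  · obtain rfl : a = b := hab
    exact Or.inl ⟨a, rfl⟩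
  · exact Or.inr ⟨a, b, hab, rfl⟩

theorem edgeVar_ne_edgeVar_symm {i j : Fin n} (h : G.Adj i j) : edgeVar h ≠ edgeVar h.symm :=
  fun he => h.ne (congrArg (·.1.1) he)

theorem fij_eq_monomial_sub_monomial (K : Type) [Field K] {i j : Fin n} (h : G.Adj i j) :
    fij K h = monomial (single (diagVar G i) 1 + single (diagVar G j) 1) 1 -
      monomial (single (edgeVar h) 1 + single (edgeVar h.symm) 1) 1 := by
  simp only [fij, X, monomial_mul, mul_one]
  rfl

theorem fij_mem_PG (K : Type) [Field K] {i j : Fin n} (h : G.Adj i j) : fij K h ∈ PG K n G := by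
  rcases h.ne.lt_or_gt with hlt | hlt
  · exact Ideal.subset_span ⟨i, j, h, hlt, rfl⟩
  · have : fij K h = fij K h.symm := by simp only [fij]; ring
    exact this ▸ Ideal.subset_span ⟨j, i, h.symm, hlt, rfl⟩

def IsStandard (d : VarSet n G →₀ ℕ) : Prop :=
  ∀ ⦃i j : Fin n⦄ (h : G.Adj i j), d (edgeVar h) = 0 ∨ d (edgeVar h.symm) = 0

noncomputable def offDiagDegree : (VarSet n G →₀ ℕ) →+ ℕ :=
  weight fun v => if v.1.1 = v.1.2 then 0 else 1

theorem exists_offDiagDegree_lt_sub_mem_PG (K : Type) [Field K] {d : VarSet n G →₀ ℕ}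
    {i j : Fin n} (h : G.Adj i j) (hij : d (edgeVar h) ≠ 0) (hji : d (edgeVar h.symm) ≠ 0) :
    ∃ d₁, offDiagDegree d₁ < offDiagDegree d ∧ monomial d (1 : K) - monomial d₁ 1 ∈ PG K n G := by
  classical
  set e := single (edgeVar h) 1 + single (edgeVar h.symm) 1
  have he : e ≤ d := by
    intro v
    have := edgeVar_ne_edgeVar_symm h
    simp only [e, Finsupp.coe_add, Pi.add_apply, single_apply]
    grind
  set d₁ := d - e + (single (diagVar G i) 1 + single (diagVar G j) 1)
  refine ⟨d₁, ?_, ?_⟩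
  · conv_rhs => rw [← tsub_add_cancel_of_le he]
    simp [d₁, offDiagDegree, weight_single, e, diagVar, edgeVar, h.ne, h.ne.symm]
  · have hd₁ : monomial d (1 : K) - monomial d₁ 1 = -(monomial (d - e) 1 * fij K h) := by
      rw [fij_eq_monomial_sub_monomial, mul_sub, monomial_mul, monomial_mul, mul_one,
        tsub_add_cancel_of_le he, neg_sub]
    rw [hd₁]
    exact neg_mem (Ideal.mul_mem_left _ _ (fij_mem_PG K h))

theorem exists_isStandard_sub_mem_PG (K : Type) [Field K] (d : VarSet n G →₀ ℕ) :
    ∃ d', IsStandard d' ∧ monomial d (1 : K) - monomial d' 1 ∈ PG K n G := by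
  induction hN : offDiagDegree d using Nat.strong_induction_on generalizing d with
  | _ N ih =>
  by_cases hd : IsStandard d
  · exact ⟨d, hd, by simp⟩
  simp only [IsStandard, not_forall, not_or] at hd
  obtain ⟨i, j, h, hij, hji⟩ := hd
  obtain ⟨d₁, hlt, hmem⟩ := exists_offDiagDegree_lt_sub_mem_PG K h hij hji
  obtain ⟨d', hd', hmem'⟩ := ih _ (hN ▸ hlt) d₁ rfl
  exact ⟨d', hd', by simpa using add_mem hmem hmem'⟩

variable (z : Fin m ≃ G.edgeSet)

theorem edgeIdx_symm {i j : Fin n} (h : G.Adj i j) : edgeIdx z h.symm = edgeIdx z h := by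
  simp only [edgeIdx, Sym2.eq_swap]

theorem aVec_diagVar (i : Fin n) : aVec n m G z (diagVar G i) = Pi.single (Sum.inl i) 1 := by
  simp [aVec, diagVar]

theorem aVec_edgeVar_of_lt {i j : Fin n} (h : G.Adj i j) (hlt : i < j) :
    aVec n m G z (edgeVar h) =
      Pi.single (Sum.inl i) 1 + Pi.single (Sum.inl j) 1 - Pi.single (Sum.inr (edgeIdx z h)) 1 := by
  simp [aVec, edgeVar, h.ne, hlt]

theorem aVec_edgeVar_of_gt {i j : Fin n} (h : G.Adj i j) (hlt : j < i) :
    aVec n m G z (edgeVar h) = Pi.single (Sum.inr (edgeIdx z h)) 1 := by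
  simp [aVec, edgeVar, h.ne, hlt.not_gt]

theorem PG_le_ker_toricMap (K : Type) [Field K] :
    PG K n G ≤ RingHom.ker (toricMap K (aVec n m G z)) := by
  refine Ideal.span_le.mpr ?_
  rintro f ⟨i, j, h, hlt, rfl⟩
  rw [fij_eq_monomial_sub_monomial]
  refine monomial_sub_monomial_mem_ker_toricMap ?_
  simp only [map_add, weight_single, one_smul, aVec_diagVar, aVec_edgeVar_of_lt z h hlt,
    aVec_edgeVar_of_gt z h.symm hlt]
  rw [edgeIdx_symm z h]
  abel

theorem edgeIdx_eq_edgeIdx_iff {a b i j : Fin n} (h' : G.Adj a b) (h : G.Adj i j) :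
    edgeIdx z h' = edgeIdx z h ↔ a = i ∧ b = j ∨ a = j ∧ b = i := by
  simp [edgeIdx]

theorem aVec_apply_inr_edgeIdx {i j : Fin n} (h : G.Adj i j) (hlt : i < j) (v : VarSet n G) :
    aVec n m G z v (Sum.inr (edgeIdx z h)) =
      (if v = edgeVar h.symm then 1 else 0) - if v = edgeVar h then 1 else 0 := by
  obtain ⟨a, rfl⟩ | ⟨a, b, hab, rfl⟩ := eq_diagVar_or_eq_edgeVar v
  · rw [aVec_diagVar]
    simp only [ne_eq, reduceCtorEq, not_false_eq_true, Pi.single_eq_of_ne, diagVar, edgeVar,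
      Subtype.mk.injEq, Prod.mk.injEq]
    grind
  · rcases hab.ne.lt_or_gt with hlt' | hlt'
    · rw [aVec_edgeVar_of_lt z hab hlt']
      simp only [Pi.sub_apply, Pi.add_apply, Pi.single_apply, Sum.inr.injEq, reduceCtorEq,
        edgeIdx_eq_edgeIdx_iff, edgeVar, Subtype.mk.injEq, Prod.mk.injEq]
      grind
    · rw [aVec_edgeVar_of_gt z hab hlt']
      simp only [Pi.single_apply, Sum.inr.injEq, edgeIdx_eq_edgeIdx_iff, edgeVar,
        Subtype.mk.injEq, Prod.mk.injEq]
      grind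

theorem weight_aVec_injOn : Set.InjOn (weight (aVec n m G z)) {d | IsStandard d} := by
  classical
  intro d hd d' hd' hA
  have hcoord (c : Fin n ⊕ Fin m) : ∑ v, ((d v : ℤ) - d' v) * aVec n m G z v c = 0 := by
    simpa [weight_eq_sum, sub_mul, sub_eq_zero] using congrFun hA c
  have hoff_of_lt {i j : Fin n} (h : G.Adj i j) (hlt : i < j) :
      d (edgeVar h) = d' (edgeVar h) ∧ d (edgeVar h.symm) = d' (edgeVar h.symm) := by
    have hedge := hcoord (Sum.inr (edgeIdx z h))
    simp only [aVec_apply_inr_edgeIdx z h hlt, mul_sub, mul_ite, mul_one, mul_zero,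
      Finset.sum_sub_distrib, Finset.sum_ite_eq', Finset.mem_univ, if_true] at hedge
    have hstd := hd h
    have hstd' := hd' h
    omega
  have hoff {i j : Fin n} (h : G.Adj i j) : d (edgeVar h) = d' (edgeVar h) := by
    rcases h.ne.lt_or_gt with hlt | hlt
    · exact (hoff_of_lt h hlt).1
    · exact (hoff_of_lt h.symm hlt).2
  have hdiag (i : Fin n) : d (diagVar G i) = d' (diagVar G i) := by
    have := hcoord (Sum.inl i)
    rw [Finset.sum_eq_single (diagVar G i)] at this
    · simpa [aVec_diagVar, sub_eq_zero] using this
    · intro v _ hv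
      obtain ⟨k, rfl⟩ | ⟨k, l, h, rfl⟩ := eq_diagVar_or_eq_edgeVar v
      · have hki : k ≠ i := fun hki => hv (hki ▸ rfl)
        simp [aVec_diagVar, hki]
      · simp [hoff h]
    · simp
  ext v
  obtain ⟨i, rfl⟩ | ⟨i, j, h, rfl⟩ := eq_diagVar_or_eq_edgeVar v
  exacts [hdiag i, hoff h]

end Graph

/-- `P_G` coincides with the toric ideal `I_{A_G}`, the kernel of `φ`. -/
theorem PG_eq_toric_ideal (K : Type) [Field K] (n m : ℕ) (G : SimpleGraph (Fin n))
    (z : Fin m ≃ G.edgeSet) :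
    PG K n G = RingHom.ker (phiMap K n m G z).toRingHom := by
  have hle : PG K n G ≤ RingHom.ker (toricMap K (aVec n m G z)) := PG_le_ker_toricMap z K
  exact le_antisymm hle
    (ker_toricMap_le hle (weight_aVec_injOn z) (exists_isStandard_sub_mem_PG K))
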